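/- On the space of smooth functions on ℝⁿ∖{0}, let h = 2∑ᵢ xᵢ∂ᵢ + (n−2), for a nondegenerate quadratic form Q(x)=∑ᵢ Aᵢxᵢ² let Box_Q = ∑ᵢ Aᵢ⁻¹ ∂ᵢ², and for a linear functional w with q*(w)=−1 let e = i·w (multiplication operator) and f = i·(w·Box_Q − h·∂_w^Q), where ∂_w^Q is the directional derivative along the vector corresponding to w under the isomorphism induced by Q. Then {e,h,f} satisfies the sl₂ commutation relations: [e,f] = h, [h,f] = −2f, [h,e] = 2e, as operators on smooth functions restricted to the cone Q=0 (equivalently, the relations hold modulo the ideal generated by Q). -/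

import Mathlib

open Complex

/-- Partial derivative of a complex-valued function on `ℝⁿ` in direction `i`. -/
noncomputable def pd {n : ℕ} (i : Fin n) (φ : (Fin n → ℝ) → ℂ) :
    (Fin n → ℝ) → ℂ :=
  fun x => fderiv ℝ φ x (Pi.single i 1)

/-- The linear function determined by `w`. -/
noncomputable def wlin {n : ℕ} (w : Fin n → ℝ) (x : Fin n → ℝ) : ℂ :=
  ((∑ i, w i * x i : ℝ) : ℂ)

/-- The shifted Euler operator `h = 2∑ xᵢ∂ᵢ + (n-2)`. -/
noncomputable def hOp {n : ℕ} (φ : (Fin n → ℝ) → ℂ) : (Fin n → ℝ) → ℂ :=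
  fun x => 2 * ∑ i, (x i : ℂ) * pd i φ x + ((n : ℂ) - 2) * φ x

/-- The Laplace operator `Box_Q = ∑ Aᵢ⁻¹ ∂ᵢ²` of the diagonal form `Q = ∑ Aᵢxᵢ²`. -/
noncomputable def boxQ {n : ℕ} (A : Fin n → ℝ) (φ : (Fin n → ℝ) → ℂ) :
    (Fin n → ℝ) → ℂ :=
  fun x => ∑ i, ((A i : ℂ))⁻¹ * pd i (pd i φ) x

/-- The directional derivative `∂_w^Q = ∑ (wᵢ/Aᵢ) ∂ᵢ` along `τ⁻¹(w)`. -/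
noncomputable def dwQ {n : ℕ} (A w : Fin n → ℝ) (φ : (Fin n → ℝ) → ℂ) :
    (Fin n → ℝ) → ℂ :=
  fun x => ∑ i, ((w i / A i : ℝ) : ℂ) * pd i φ x

/-- The operator `e = i·w` (multiplication by `i` times the linear function `w`). -/
noncomputable def eOp {n : ℕ} (w : Fin n → ℝ) (φ : (Fin n → ℝ) → ℂ) :
    (Fin n → ℝ) → ℂ :=
  fun x => Complex.I * wlin w x * φ x

/-- The operator `f = i·(w·Box_Q − h∘∂_w^Q)`. -/
noncomputable def fOp {n : ℕ} (A w : Fin n → ℝ) (φ : (Fin n → ℝ) → ℂ) :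
    (Fin n → ℝ) → ℂ :=
  fun x => Complex.I * (wlin w x * boxQ A φ x - hOp (dwQ A w φ) x)

section API
variable {n : ℕ} {s : Set (Fin n → ℝ)} {φ ψ : (Fin n → ℝ) → ℂ} {x : Fin n → ℝ}
  {i j : Fin n}

lemma da (hs : IsOpen s) (hφ : ContDiffOn ℝ (⊤ : ℕ∞) φ s) (hx : x ∈ s) :
    DifferentiableAt ℝ φ x :=
  (hφ.contDiffAt (hs.mem_nhds hx)).differentiableAt (by simp)

lemma cd_pd (hs : IsOpen s) (hφ : ContDiffOn ℝ (⊤ : ℕ∞) φ s) (i : Fin n) :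
    ContDiffOn ℝ (⊤ : ℕ∞) (pd i φ) s :=
  (hφ.fderiv_of_isOpen hs (by simp)).clm_apply contDiffOn_const

lemma pd_congr (hs : IsOpen s) (hx : x ∈ s) (h : Set.EqOn φ ψ s) :
    pd i φ x = pd i ψ x := by
  unfold pd
  rw [Filter.EventuallyEq.fderiv_eq (Filter.eventuallyEq_of_mem (hs.mem_nhds hx) h)]

lemma pd_add (hφ : DifferentiableAt ℝ φ x) (hψ : DifferentiableAt ℝ ψ x) :
    pd i (fun y => φ y + ψ y) x = pd i φ x + pd i ψ x := by
  unfold pd; rw [fderiv_fun_add hφ hψ]; rfl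

lemma pd_sub (hφ : DifferentiableAt ℝ φ x) (hψ : DifferentiableAt ℝ ψ x) :
    pd i (fun y => φ y - ψ y) x = pd i φ x - pd i ψ x := by
  unfold pd; rw [fderiv_fun_sub hφ hψ]; rfl

lemma pd_const_mul (hφ : DifferentiableAt ℝ φ x) (c : ℂ) :
    pd i (fun y => c * φ y) x = c * pd i φ x := by
  unfold pd; rw [fderiv_const_mul hφ c]; rfl

lemma pd_mul (hφ : DifferentiableAt ℝ φ x) (hψ : DifferentiableAt ℝ ψ x) :
    pd i (fun y => φ y * ψ y) x = pd i φ x * ψ x + φ x * pd i ψ x := by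
  unfold pd; rw [fderiv_fun_mul hφ hψ]
  simp [ContinuousLinearMap.add_apply, ContinuousLinearMap.smul_apply, smul_eq_mul]
  ring

lemma pd_sum {ι : Type*} {u : Finset ι} {F : ι → (Fin n → ℝ) → ℂ}
    (h : ∀ k ∈ u, DifferentiableAt ℝ (F k) x) :
    pd i (fun y => ∑ k ∈ u, F k y) x = ∑ k ∈ u, pd i (F k) x := by
  unfold pd; rw [fderiv_fun_sum h]; simp

/-- the coordinate function as a CLM -/
noncomputable def coordL (j : Fin n) : (Fin n → ℝ) →L[ℝ] ℂ :=
  Complex.ofRealCLM.comp (ContinuousLinearMap.proj j)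

lemma coordL_apply (j : Fin n) (y : Fin n → ℝ) : coordL j y = ((y j : ℝ) : ℂ) := rfl

lemma pd_coord (i j : Fin n) (x : Fin n → ℝ) :
    pd i (fun y => ((y j : ℝ) : ℂ)) x = if j = i then 1 else 0 := by
  have : pd i (fun y => ((y j : ℝ) : ℂ)) x = (coordL j) (Pi.single i 1) := by
    unfold pd
    rw [show (fun y : Fin n → ℝ => ((y j : ℝ) : ℂ)) = coordL j from rfl,
      (coordL j).fderiv]
  rw [this]
  simp only [coordL, ContinuousLinearMap.comp_apply, ContinuousLinearMap.proj_apply,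
    Pi.single_apply, Complex.ofRealCLM_apply]
  split <;> simp

lemma diff_coord (j : Fin n) : Differentiable ℝ (fun y : Fin n → ℝ => ((y j : ℝ) : ℂ)) :=
  (coordL j).differentiable

lemma cd_coord (j : Fin n) : ContDiff ℝ (⊤ : ℕ∞) (fun y : Fin n → ℝ => ((y j : ℝ) : ℂ)) :=
  (coordL j).contDiff

lemma pd_comm (hs : IsOpen s) (hφ : ContDiffOn ℝ (⊤ : ℕ∞) φ s) (hx : x ∈ s) :
    pd i (pd j φ) x = pd j (pd i φ) x := by
  have hev : ∀ᶠ y in nhds x, HasFDerivAt φ (fderiv ℝ φ y) y := by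
    filter_upwards [hs.mem_nhds hx] with y hy using (da hs hφ hy).hasFDerivAt
  have hd2 : DifferentiableAt ℝ (fderiv ℝ φ) x :=
    ((hφ.fderiv_of_isOpen (m := (⊤ : ℕ∞)) hs (by simp)).contDiffAt (hs.mem_nhds hx)).differentiableAt (by simp)
  have hsymm := second_derivative_symmetric_of_eventually hev hd2.hasFDerivAt
    (Pi.single i 1) (Pi.single j 1)
  have key : ∀ k l : Fin n, pd k (pd l φ) x
      = (fderiv ℝ (fderiv ℝ φ) x) (Pi.single k 1) (Pi.single l 1) := by
    intro k l
    unfold pd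
    rw [fderiv_clm_apply hd2 (differentiableAt_const _)]
    simp
  rw [key i j, key j i, hsymm]

end API

section API2
variable {n : ℕ} {s : Set (Fin n → ℝ)} {A w : Fin n → ℝ}
  {φ ψ : (Fin n → ℝ) → ℂ} {x : Fin n → ℝ} {i j : Fin n}

lemma wlin_eq (w : Fin n → ℝ) :
    wlin w = fun x => ∑ j, ((w j : ℝ) : ℂ) * ((x j : ℝ) : ℂ) := by
  funext x; unfold wlin; push_cast; rfl

lemma cd_wlin (w : Fin n → ℝ) : ContDiff ℝ (⊤ : ℕ∞) (wlin w) := by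
  rw [wlin_eq]
  exact ContDiff.sum fun j _ => contDiff_const.mul (cd_coord j)

lemma diff_wlin (w : Fin n → ℝ) : Differentiable ℝ (wlin w) :=
  (cd_wlin w).differentiable (by simp)

lemma pd_wlin (w : Fin n → ℝ) (x : Fin n → ℝ) : pd i (wlin w) x = ((w i : ℝ) : ℂ) := by
  rw [wlin_eq]
  rw [pd_sum (fun k _ => ((diff_coord k).differentiableAt).const_mul _)]
  have : ∀ k : Fin n, pd i (fun y => ((w k : ℝ) : ℂ) * ((y k : ℝ) : ℂ)) x
      = ((w k : ℝ) : ℂ) * (if k = i then 1 else 0) := by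
    intro k
    rw [pd_const_mul ((diff_coord k).differentiableAt), pd_coord]
  simp only [this, mul_ite, mul_one, mul_zero]
  simp

lemma cd_eOp (hs : IsOpen s) (hφ : ContDiffOn ℝ (⊤ : ℕ∞) φ s) :
    ContDiffOn ℝ (⊤ : ℕ∞) (eOp w φ) s :=
  ((contDiff_const.mul (cd_wlin w)).contDiffOn).mul hφ

lemma cd_hOp (hs : IsOpen s) (hφ : ContDiffOn ℝ (⊤ : ℕ∞) φ s) :
    ContDiffOn ℝ (⊤ : ℕ∞) (hOp φ) s :=
  (contDiffOn_const.mul (ContDiffOn.sum fun i _ =>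
    ((cd_coord i).contDiffOn).mul (cd_pd hs hφ i))).add (contDiffOn_const.mul hφ)

lemma cd_dwQ (hs : IsOpen s) (hφ : ContDiffOn ℝ (⊤ : ℕ∞) φ s) :
    ContDiffOn ℝ (⊤ : ℕ∞) (dwQ A w φ) s :=
  ContDiffOn.sum fun i _ => contDiffOn_const.mul (cd_pd hs hφ i)

lemma cd_boxQ (hs : IsOpen s) (hφ : ContDiffOn ℝ (⊤ : ℕ∞) φ s) :
    ContDiffOn ℝ (⊤ : ℕ∞) (boxQ A φ) s :=
  ContDiffOn.sum fun i _ => contDiffOn_const.mul (cd_pd hs (cd_pd hs hφ i) i)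

lemma cd_fOp (hs : IsOpen s) (hφ : ContDiffOn ℝ (⊤ : ℕ∞) φ s) :
    ContDiffOn ℝ (⊤ : ℕ∞) (fOp A w φ) s :=
  contDiffOn_const.mul ((((cd_wlin w).contDiffOn).mul (cd_boxQ hs hφ)).sub
    (cd_hOp hs (cd_dwQ hs hφ)))

end API2

section API3
variable {n : ℕ} {s : Set (Fin n → ℝ)} {A w : Fin n → ℝ}
  {φ ψ : (Fin n → ℝ) → ℂ} {x : Fin n → ℝ} {i j : Fin n}

/-- P1 -/
lemma pd_eOp (hs : IsOpen s) (hφ : ContDiffOn ℝ (⊤ : ℕ∞) φ s) (hx : x ∈ s) :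
    pd j (eOp w φ) x = Complex.I * ((w j : ℝ) : ℂ) * φ x + eOp w (pd j φ) x := by
  have h1 : eOp w φ = fun y => (fun y => Complex.I * wlin w y) y * φ y := rfl
  rw [h1, pd_mul (((diff_wlin w).differentiableAt).const_mul _) (da hs hφ hx),
    pd_const_mul ((diff_wlin w).differentiableAt), pd_wlin]
  unfold eOp; ring

/-- P2 -/
lemma pd_hOp (hs : IsOpen s) (hφ : ContDiffOn ℝ (⊤ : ℕ∞) φ s) (hx : x ∈ s) :
    pd j (hOp φ) x = hOp (pd j φ) x + 2 * pd j φ x := by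
  have h1 : hOp φ = fun y => (fun y => 2 * ∑ i, ((y i : ℝ) : ℂ) * pd i φ y) y
      + (fun y => ((n : ℂ) - 2) * φ y) y := rfl
  have hdiffsum : ∀ k : Fin n, DifferentiableAt ℝ
      (fun y => ((y k : ℝ) : ℂ) * pd k φ y) x :=
    fun k => ((diff_coord k).differentiableAt).mul (da hs (cd_pd hs hφ k) hx)
  rw [h1, pd_add ((DifferentiableAt.fun_sum (fun k _ => hdiffsum k)).const_mul 2)
      ((da hs hφ hx).const_mul _),
    pd_const_mul (DifferentiableAt.fun_sum (fun k _ => hdiffsum k)),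
    pd_const_mul (da hs hφ hx),
    pd_sum (fun k _ => hdiffsum k)]
  have h2 : ∀ k : Fin n, pd j (fun y => ((y k : ℝ) : ℂ) * pd k φ y) x
      = (if k = j then 1 else 0) * pd k φ x + ((x k : ℝ) : ℂ) * pd k (pd j φ) x := by
    intro k
    rw [pd_mul ((diff_coord k).differentiableAt) (da hs (cd_pd hs hφ k) hx), pd_coord,
      pd_comm hs hφ hx]
  simp only [h2, Finset.sum_add_distrib, ite_mul, one_mul, zero_mul,
    Finset.sum_ite_eq', Finset.mem_univ, if_true]
  unfold hOp; ring

/-- P3 -/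
lemma pd_dwQ (hs : IsOpen s) (hφ : ContDiffOn ℝ (⊤ : ℕ∞) φ s) (hx : x ∈ s) :
    pd j (dwQ A w φ) x = dwQ A w (pd j φ) x := by
  have h1 : dwQ A w φ = fun y => ∑ i, ((w i / A i : ℝ) : ℂ) * pd i φ y := rfl
  rw [h1, pd_sum (fun k _ => (da hs (cd_pd hs hφ k) hx).const_mul _)]
  have h2 : ∀ k : Fin n, pd j (fun y => ((w k / A k : ℝ) : ℂ) * pd k φ y) x
      = ((w k / A k : ℝ) : ℂ) * pd k (pd j φ) x := by
    intro k
    rw [pd_const_mul (da hs (cd_pd hs hφ k) hx), pd_comm hs hφ hx]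
  simp only [h2]; rfl

/-- P4 -/
lemma pd_boxQ (hs : IsOpen s) (hφ : ContDiffOn ℝ (⊤ : ℕ∞) φ s) (hx : x ∈ s) :
    pd j (boxQ A φ) x = boxQ A (pd j φ) x := by
  have h1 : boxQ A φ = fun y => ∑ i, ((A i : ℂ))⁻¹ * pd i (pd i φ) y := rfl
  rw [h1, pd_sum (fun k _ => (da hs (cd_pd hs (cd_pd hs hφ k) k) hx).const_mul _)]
  have h2 : ∀ k : Fin n, pd j (fun y => ((A k : ℂ))⁻¹ * pd k (pd k φ) y) x
      = ((A k : ℂ))⁻¹ * pd k (pd k (pd j φ)) x := by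
    intro k
    rw [pd_const_mul (da hs (cd_pd hs (cd_pd hs hφ k) k) hx),
      pd_comm hs (cd_pd hs hφ k) hx,
      pd_congr (i := k) hs hx (fun y hy => pd_comm hs hφ hy)]
  simp only [h2]; rfl

lemma hOp_congr (hs : IsOpen s) (hx : x ∈ s) (h : Set.EqOn φ ψ s) :
    hOp φ x = hOp ψ x := by
  unfold hOp
  rw [h hx]
  congr 2
  exact Finset.sum_congr rfl fun k _ => by rw [pd_congr hs hx h]

lemma hOp_add (hφ : DifferentiableAt ℝ φ x) (hψ : DifferentiableAt ℝ ψ x) :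
    hOp (fun y => φ y + ψ y) x = hOp φ x + hOp ψ x := by
  unfold hOp
  simp only [pd_add hφ hψ]
  rw [Finset.sum_congr rfl (fun k _ => mul_add ((x k : ℂ)) (pd k φ x) (pd k ψ x)),
    Finset.sum_add_distrib]
  ring

lemma hOp_const_mul (hφ : DifferentiableAt ℝ φ x) (c : ℂ) :
    hOp (fun y => c * φ y) x = c * hOp φ x := by
  unfold hOp
  simp only [pd_const_mul hφ]
  rw [Finset.sum_congr rfl (fun k _ => (mul_left_comm ((x k : ℂ)) c (pd k φ x))),
    ← Finset.mul_sum]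
  ring

lemma hOp_sum {F : Fin n → (Fin n → ℝ) → ℂ} {c : Fin n → ℂ}
    (h : ∀ k, DifferentiableAt ℝ (F k) x) :
    hOp (fun y => ∑ k, c k * F k y) x = ∑ k, c k * hOp (F k) x := by
  unfold hOp
  simp only [pd_sum (fun k _ => (h k).const_mul (c k)),
    pd_const_mul (h _)]
  have h1 : ∀ i : Fin n, ((x i : ℝ) : ℂ) * ∑ k, c k * pd i (F k) x
      = ∑ k, c k * (((x i : ℝ) : ℂ) * pd i (F k) x) := by
    intro i
    rw [Finset.mul_sum]
    exact Finset.sum_congr rfl fun k _ => by ring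
  simp only [h1]
  rw [Finset.sum_comm, Finset.mul_sum, Finset.mul_sum, ← Finset.sum_add_distrib]
  exact Finset.sum_congr rfl fun k _ => by rw [← Finset.mul_sum]; ring

end API3

section API4
variable {n : ℕ} {s : Set (Fin n → ℝ)} {A w : Fin n → ℝ}
  {φ ψ : (Fin n → ℝ) → ℂ} {x y : Fin n → ℝ} {i j : Fin n}

lemma hOp_apply : hOp φ x = 2 * ∑ i, ((x i : ℝ) : ℂ) * pd i φ x + ((n : ℂ) - 2) * φ x := rfl
lemma eOp_apply : eOp w φ x = Complex.I * wlin w x * φ x := rfl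
lemma dwQ_apply : dwQ A w φ x = ∑ i, ((w i / A i : ℝ) : ℂ) * pd i φ x := rfl
lemma boxQ_apply : boxQ A φ x = ∑ i, ((A i : ℂ))⁻¹ * pd i (pd i φ) x := rfl
lemma fOp_apply : fOp A w φ x = Complex.I * (wlin w x * boxQ A φ x - hOp (dwQ A w φ) x) := rfl

lemma cast_xw : (∑ i, ((x i : ℝ) : ℂ) * ((w i : ℝ) : ℂ)) = wlin w x := by
  unfold wlin
  push_cast
  exact Finset.sum_congr rfl fun k _ => by ring

lemma cast_cw (hw : ∑ i, w i ^ 2 / A i = -1) :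
    (∑ i, ((w i / A i : ℝ) : ℂ) * ((w i : ℝ) : ℂ)) = -1 := by
  have h : ∑ i, w i / A i * w i = -1 := by
    rw [← hw]; exact Finset.sum_congr rfl fun i _ => by ring
  calc (∑ i, ((w i / A i : ℝ) : ℂ) * ((w i : ℝ) : ℂ))
      = ((∑ i, w i / A i * w i : ℝ) : ℂ) := by push_cast; rfl
    _ = -1 := by rw [h]; norm_num

lemma cast_inv (A w : Fin n → ℝ) (i : Fin n) :
    ((A i : ℂ))⁻¹ * ((w i : ℝ) : ℂ) = ((w i / A i : ℝ) : ℂ) := by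
  push_cast; ring

/-- Q3 : [h, e] = 2e -/
lemma hOp_eOp (hs : IsOpen s) (hφ : ContDiffOn ℝ (⊤ : ℕ∞) φ s) (hx : x ∈ s) :
    hOp (eOp w φ) x = eOp w (hOp φ) x + 2 * eOp w φ x := by
  rw [hOp_apply (φ := eOp w φ),
    Finset.sum_congr rfl (fun k _ => by rw [pd_eOp hs hφ hx])]
  have split : ∑ k, ((x k : ℝ) : ℂ) *
      (Complex.I * ((w k : ℝ) : ℂ) * φ x + eOp w (pd k φ) x)
      = Complex.I * φ x * (∑ k, ((x k : ℝ) : ℂ) * ((w k : ℝ) : ℂ))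
        + Complex.I * wlin w x * (∑ k, ((x k : ℝ) : ℂ) * pd k φ x) := by
    rw [Finset.mul_sum, Finset.mul_sum, ← Finset.sum_add_distrib]
    exact Finset.sum_congr rfl fun k _ => by rw [eOp_apply]; ring
  rw [split, cast_xw, eOp_apply, eOp_apply, hOp_apply]
  ring

/-- Q1 -/
lemma boxQ_eOp (hs : IsOpen s) (hφ : ContDiffOn ℝ (⊤ : ℕ∞) φ s) (hx : x ∈ s) :
    boxQ A (eOp w φ) x = Complex.I * wlin w x * boxQ A φ x
      + 2 * Complex.I * dwQ A w φ x := by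
  have h1 : ∀ k : Fin n, pd k (pd k (eOp w φ)) x
      = 2 * Complex.I * ((w k : ℝ) : ℂ) * pd k φ x
        + Complex.I * wlin w x * pd k (pd k φ) x := by
    intro k
    have e1 : Set.EqOn (pd k (eOp w φ))
        (fun y => Complex.I * ((w k : ℝ) : ℂ) * φ y + eOp w (pd k φ) y) s :=
      fun y hy => pd_eOp hs hφ hy
    rw [pd_congr hs hx e1,
      pd_add ((da hs hφ hx).const_mul _) (da hs (cd_eOp hs (cd_pd hs hφ k)) hx),
      pd_const_mul (da hs hφ hx), pd_eOp hs (cd_pd hs hφ k) hx, eOp_apply]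
    ring
  rw [boxQ_apply (φ := eOp w φ), Finset.sum_congr rfl (fun k _ => by rw [h1 k])]
  have split : ∑ k, ((A k : ℂ))⁻¹ *
      (2 * Complex.I * ((w k : ℝ) : ℂ) * pd k φ x
        + Complex.I * wlin w x * pd k (pd k φ) x)
      = 2 * Complex.I * (∑ k, ((w k / A k : ℝ) : ℂ) * pd k φ x)
        + Complex.I * wlin w x * (∑ k, ((A k : ℂ))⁻¹ * pd k (pd k φ) x) := by
    rw [Finset.mul_sum, Finset.mul_sum, ← Finset.sum_add_distrib]
    refine Finset.sum_congr rfl fun k _ => ?_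
    rw [← cast_inv A w k]
    ring
  rw [split, ← dwQ_apply, ← boxQ_apply]
  ring

/-- Q2 -/
lemma dwQ_eOp (hs : IsOpen s) (hφ : ContDiffOn ℝ (⊤ : ℕ∞) φ s)
    (hw : ∑ i, w i ^ 2 / A i = -1) (hy : y ∈ s) :
    dwQ A w (eOp w φ) y = -Complex.I * φ y + eOp w (dwQ A w φ) y := by
  rw [dwQ_apply (φ := eOp w φ),
    Finset.sum_congr rfl (fun k _ => by rw [pd_eOp hs hφ hy])]
  have split : ∑ k, ((w k / A k : ℝ) : ℂ) *
      (Complex.I * ((w k : ℝ) : ℂ) * φ y + eOp w (pd k φ) y)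
      = Complex.I * φ y * (∑ k, ((w k / A k : ℝ) : ℂ) * ((w k : ℝ) : ℂ))
        + Complex.I * wlin w y * (∑ k, ((w k / A k : ℝ) : ℂ) * pd k φ y) := by
    rw [Finset.mul_sum, Finset.mul_sum, ← Finset.sum_add_distrib]
    exact Finset.sum_congr rfl fun k _ => by rw [eOp_apply]; ring
  rw [split, cast_cw hw, eOp_apply, dwQ_apply]
  ring

/-- Q5 -/
lemma dwQ_hOp (hs : IsOpen s) (hφ : ContDiffOn ℝ (⊤ : ℕ∞) φ s) (hy : y ∈ s) :
    dwQ A w (hOp φ) y = hOp (dwQ A w φ) y + 2 * dwQ A w φ y := by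
  rw [dwQ_apply (φ := hOp φ),
    Finset.sum_congr rfl (fun k _ => by rw [pd_hOp hs hφ hy])]
  have split : ∑ k, ((w k / A k : ℝ) : ℂ) * (hOp (pd k φ) y + 2 * pd k φ y)
      = (∑ k, ((w k / A k : ℝ) : ℂ) * hOp (pd k φ) y)
        + 2 * (∑ k, ((w k / A k : ℝ) : ℂ) * pd k φ y) := by
    rw [Finset.mul_sum, ← Finset.sum_add_distrib]
    exact Finset.sum_congr rfl fun k _ => by ring
  rw [split, ← hOp_sum (fun k => da hs (cd_pd hs hφ k) hy), dwQ_apply]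
  rfl

/-- Q4 -/
lemma boxQ_hOp (hs : IsOpen s) (hφ : ContDiffOn ℝ (⊤ : ℕ∞) φ s) (hx : x ∈ s) :
    boxQ A (hOp φ) x = hOp (boxQ A φ) x + 4 * boxQ A φ x := by
  have h1 : ∀ k : Fin n, pd k (pd k (hOp φ)) x
      = hOp (pd k (pd k φ)) x + 4 * pd k (pd k φ) x := by
    intro k
    have e1 : Set.EqOn (pd k (hOp φ)) (fun y => hOp (pd k φ) y + 2 * pd k φ y) s :=
      fun y hy => pd_hOp hs hφ hy
    rw [pd_congr hs hx e1,
      pd_add (da hs (cd_hOp hs (cd_pd hs hφ k)) hx) ((da hs (cd_pd hs hφ k) hx).const_mul 2),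
      pd_const_mul (da hs (cd_pd hs hφ k) hx), pd_hOp hs (cd_pd hs hφ k) hx]
    ring
  rw [boxQ_apply (φ := hOp φ), Finset.sum_congr rfl (fun k _ => by rw [h1 k])]
  have split : ∑ k, ((A k : ℂ))⁻¹ * (hOp (pd k (pd k φ)) x + 4 * pd k (pd k φ) x)
      = (∑ k, ((A k : ℂ))⁻¹ * hOp (pd k (pd k φ)) x)
        + 4 * (∑ k, ((A k : ℂ))⁻¹ * pd k (pd k φ) x) := by
    rw [Finset.mul_sum, ← Finset.sum_add_distrib]
    exact Finset.sum_congr rfl fun k _ => by ring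
  rw [split, ← hOp_sum (fun k => da hs (cd_pd hs (cd_pd hs hφ k) k) hx), ← boxQ_apply]
  rfl

/-- P6 -/
lemma pd_fOp (hs : IsOpen s) (hφ : ContDiffOn ℝ (⊤ : ℕ∞) φ s) (hx : x ∈ s) :
    pd j (fOp A w φ) x = Complex.I * (((w j : ℝ) : ℂ) * boxQ A φ x
      + wlin w x * boxQ A (pd j φ) x - hOp (dwQ A w (pd j φ)) x
      - 2 * dwQ A w (pd j φ) x) := by
  have hg : DifferentiableAt ℝ (fun y => wlin w y * boxQ A φ y - hOp (dwQ A w φ) y) x :=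
    (((diff_wlin w).differentiableAt).mul (da hs (cd_boxQ hs hφ) hx)).sub
      (da hs (cd_hOp hs (cd_dwQ hs hφ)) hx)
  rw [show fOp A w φ = (fun y =>
      Complex.I * (fun y => wlin w y * boxQ A φ y - hOp (dwQ A w φ) y) y) from rfl,
    pd_const_mul hg,
    pd_sub (((diff_wlin w).differentiableAt).fun_mul (da hs (cd_boxQ hs hφ) hx))
      (da hs (cd_hOp hs (cd_dwQ hs hφ)) hx),
    pd_mul ((diff_wlin w).differentiableAt) (da hs (cd_boxQ hs hφ) hx),
    pd_wlin, pd_boxQ hs hφ hx, pd_hOp hs (cd_dwQ hs hφ) hx, pd_dwQ hs hφ hx,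
    hOp_congr hs hx (show Set.EqOn (pd j (dwQ A w φ)) (dwQ A w (pd j φ)) s from
      fun y hy => pd_dwQ hs hφ hy)]
  ring

end API4

/-- The triple `{e, h, f}` satisfies the `sl₂` commutation relations
`[e,f] = h`, `[h,f] = -2f`, `[h,e] = 2e` as operators on smooth functions on
`ℝⁿ∖{0}` restricted to the cone `Q = 0`. -/
theorem sl2_relations_on_cone (n : ℕ) (A w : Fin n → ℝ)
    (hA : ∀ i, A i ≠ 0) (hw : ∑ i, w i ^ 2 / A i = -1)
    (φ : (Fin n → ℝ) → ℂ) (hφ : ContDiffOn ℝ (⊤ : ℕ∞) φ {x | x ≠ 0})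
    (x : Fin n → ℝ) (hx : x ≠ 0) (hxC : ∑ i, A i * x i ^ 2 = 0) :
    eOp w (fOp A w φ) x - fOp A w (eOp w φ) x = hOp φ x ∧
    hOp (fOp A w φ) x - fOp A w (hOp φ) x = -2 * fOp A w φ x ∧
    hOp (eOp w φ) x - eOp w (hOp φ) x = 2 * eOp w φ x := by
  have hs : IsOpen {y : Fin n → ℝ | y ≠ 0} := isOpen_ne
  have hx' : x ∈ {y : Fin n → ℝ | y ≠ 0} := hx
  have hD : ContDiffOn ℝ (⊤ : ℕ∞) (dwQ A w φ) {y : Fin n → ℝ | y ≠ 0} := cd_dwQ hs hφ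
  refine ⟨?_, ?_, ?_⟩
  · -- [e,f] = h
    have hdw : hOp (dwQ A w (eOp w φ)) x
        = -Complex.I * hOp φ x
          + (Complex.I * wlin w x * hOp (dwQ A w φ) x
            + 2 * (Complex.I * wlin w x * dwQ A w φ x)) := by
      rw [hOp_congr hs hx' (show Set.EqOn (dwQ A w (eOp w φ))
            (fun y => -Complex.I * φ y + eOp w (dwQ A w φ) y) {y : Fin n → ℝ | y ≠ 0} from
            fun y hy => dwQ_eOp hs hφ hw hy),
        hOp_add ((da hs hφ hx').const_mul (-Complex.I)) (da hs (cd_eOp hs hD) hx'),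
        hOp_const_mul (da hs hφ hx'), hOp_eOp hs hD hx', eOp_apply, eOp_apply]
    rw [eOp_apply (φ := fOp A w φ), fOp_apply (φ := eOp w φ), boxQ_eOp hs hφ hx',
      hdw, fOp_apply]
    linear_combination (-(hOp φ x)) * Complex.I_sq
  · -- [h,f] = -2f
    have split1 : ∑ k, ((x k : ℝ) : ℂ) * (Complex.I * (((w k : ℝ) : ℂ) * boxQ A φ x
        + wlin w x * boxQ A (pd k φ) x - hOp (dwQ A w (pd k φ)) x
        - 2 * dwQ A w (pd k φ) x))
        = Complex.I * boxQ A φ x * (∑ k, ((x k : ℝ) : ℂ) * ((w k : ℝ) : ℂ))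
          + Complex.I * wlin w x * (∑ k, ((x k : ℝ) : ℂ) * boxQ A (pd k φ) x)
          - Complex.I * (∑ k, ((x k : ℝ) : ℂ) * hOp (dwQ A w (pd k φ)) x)
          - 2 * Complex.I * (∑ k, ((x k : ℝ) : ℂ) * dwQ A w (pd k φ) x) := by
      rw [Finset.mul_sum, Finset.mul_sum, Finset.mul_sum, Finset.mul_sum,
        ← Finset.sum_add_distrib, ← Finset.sum_sub_distrib, ← Finset.sum_sub_distrib]
      exact Finset.sum_congr rfl fun k _ => by ring
    have h_lhs : hOp (fOp A w φ) x
        = 2 * (Complex.I * boxQ A φ x * wlin w x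
          + Complex.I * wlin w x * (∑ k, ((x k : ℝ) : ℂ) * boxQ A (pd k φ) x)
          - Complex.I * (∑ k, ((x k : ℝ) : ℂ) * hOp (dwQ A w (pd k φ)) x)
          - 2 * Complex.I * (∑ k, ((x k : ℝ) : ℂ) * dwQ A w (pd k φ) x))
          + ((n : ℂ) - 2) * fOp A w φ x := by
      rw [hOp_apply (φ := fOp A w φ),
        Finset.sum_congr rfl (fun k _ => by rw [pd_fOp hs hφ hx']), split1, cast_xw]
    have h_mid1 : hOp (boxQ A φ) x
        = 2 * (∑ k, ((x k : ℝ) : ℂ) * boxQ A (pd k φ) x) + ((n : ℂ) - 2) * boxQ A φ x := by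
      rw [hOp_apply (φ := boxQ A φ),
        Finset.sum_congr rfl (fun k _ => by rw [pd_boxQ hs hφ hx'])]
    have hpdh : ∀ k : Fin n, pd k (hOp (dwQ A w φ)) x
        = hOp (dwQ A w (pd k φ)) x + 2 * dwQ A w (pd k φ) x := by
      intro k
      rw [pd_hOp hs hD hx', pd_dwQ hs hφ hx',
        hOp_congr hs hx' (show Set.EqOn (pd k (dwQ A w φ)) (dwQ A w (pd k φ))
          {y : Fin n → ℝ | y ≠ 0} from fun y hy => pd_dwQ hs hφ hy)]
    have h_mid2 : hOp (hOp (dwQ A w φ)) x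
        = 2 * ((∑ k, ((x k : ℝ) : ℂ) * hOp (dwQ A w (pd k φ)) x)
            + 2 * (∑ k, ((x k : ℝ) : ℂ) * dwQ A w (pd k φ) x))
          + ((n : ℂ) - 2) * hOp (dwQ A w φ) x := by
      have hsplit : ∑ k, ((x k : ℝ) : ℂ) *
          (hOp (dwQ A w (pd k φ)) x + 2 * dwQ A w (pd k φ) x)
          = (∑ k, ((x k : ℝ) : ℂ) * hOp (dwQ A w (pd k φ)) x)
            + 2 * (∑ k, ((x k : ℝ) : ℂ) * dwQ A w (pd k φ) x) := by
        rw [Finset.mul_sum, ← Finset.sum_add_distrib]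
        exact Finset.sum_congr rfl fun k _ => by ring
      rw [hOp_apply (φ := hOp (dwQ A w φ)),
        Finset.sum_congr rfl (fun k _ => by rw [hpdh k]), hsplit]
    have h_rhs : fOp A w (hOp φ) x
        = Complex.I * (wlin w x * (hOp (boxQ A φ) x + 4 * boxQ A φ x)
          - (hOp (hOp (dwQ A w φ)) x + 2 * hOp (dwQ A w φ) x)) := by
      rw [fOp_apply (φ := hOp φ), boxQ_hOp hs hφ hx',
        hOp_congr hs hx' (show Set.EqOn (dwQ A w (hOp φ))
          (fun y => hOp (dwQ A w φ) y + 2 * dwQ A w φ y) {y : Fin n → ℝ | y ≠ 0} from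
          fun y hy => dwQ_hOp hs hφ hy),
        hOp_add (da hs (cd_hOp hs hD) hx') ((da hs hD hx').const_mul 2),
        hOp_const_mul (da hs hD hx')]
    rw [h_lhs, h_rhs, h_mid1, h_mid2, fOp_apply]
    ring
  · -- [h,e] = 2e
    rw [hOp_eOp hs hφ hx']
    ring
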